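/- arXiv:2403.03271 — 3 statements merged into one kernel-verified Lean document; each statement's English description precedes it below -/
import Mathlib

section
/- Let A ∈ ℂ^{n×m}, B ∈ ℂ^{n×p}. Suppose range(Fᴴ) = ker(Aᴴ) for F ∈ ℂ^{t×n} and range(Gᴴ) = ker((FB)ᴴ) for G ∈ ℂ^{q×t}. Then every x ∈ ker(Aᴴ) ∩ ker(Bᴴ) lies in range((GF)ᴴ). -/
open Matrix Submodule LinearMap

/-- If `range Fᴴ = ker Aᴴ` and `range Gᴴ = ker (F * B)ᴴ`, then every vector in
`ker Aᴴ ∩ ker Bᴴ` lies in `range (G * F)ᴴ`. -/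
theorem stmt2 {n m p t q : ℕ}
    (A : Matrix (Fin n) (Fin m) ℂ) (B : Matrix (Fin n) (Fin p) ℂ)
    (F : Matrix (Fin t) (Fin n) ℂ) (G : Matrix (Fin q) (Fin t) ℂ)
    (hF : LinearMap.range (Matrix.mulVecLin Fᴴ) = ker (Matrix.mulVecLin Aᴴ))
    (hG : LinearMap.range (Matrix.mulVecLin Gᴴ) = ker (Matrix.mulVecLin (F * B)ᴴ)) :
    ∀ x : Fin n → ℂ,
      x ∈ ker (Matrix.mulVecLin Aᴴ) → x ∈ ker (Matrix.mulVecLin Bᴴ) →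
        x ∈ LinearMap.range (Matrix.mulVecLin (G * F)ᴴ) := by
  intro x hxA hxB
  rw [← hF] at hxA
  obtain ⟨y, hy⟩ := hxA
  have hyker : y ∈ ker (Matrix.mulVecLin (F * B)ᴴ) := by
    simp only [LinearMap.mem_ker, Matrix.mulVecLin_apply] at *
    rw [Matrix.conjTranspose_mul, ← Matrix.mulVec_mulVec, hy, hxB]
  rw [← hG] at hyker
  obtain ⟨z, hz⟩ := hyker
  refine ⟨z, ?_⟩
  simp only [Matrix.mulVecLin_apply] at *
  rw [Matrix.conjTranspose_mul, ← Matrix.mulVec_mulVec, hz, hy]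
end

section
/- Let S₁, …, S_L be subspaces of ℂⁿ given as kernels S_i = ker(A_iᴴ) for A_i ∈ ℂ^{n×m_i}. Define Z₀ = Iₙ, and recursively for i = 1,…,L let W_i be a matrix whose rows form a basis of ker((Z_{i−1}A_i)ᴴ) and Z_i = W_i Z_{i−1}. If the rows of Z₀ = Iₙ form a basis of ℂⁿ, then by induction the rows of Z_L form a basis of ⋂_{i=1}^{L} ker(A_iᴴ). -/
open Matrix Submodule LinearMap

private lemma iInf_fin_succ' {α : Type*} [CompleteLattice α] (k : ℕ → α) (L : ℕ) :
    (⨅ i : Fin L, k i) ⊓ k L = ⨅ i : Fin (L + 1), k i := by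
  apply le_antisymm
  · refine le_iInf fun i => ?_
    rcases Nat.lt_succ_iff_lt_or_eq.mp i.isLt with h | h
    · exact inf_le_left.trans (iInf_le (fun j : Fin L => k j) ⟨i, h⟩)
    · rw [h]; exact inf_le_right
  · refine le_inf (le_iInf fun i => ?_) ?_
    · have := iInf_le (fun j : Fin (L + 1) => k j) (Fin.castSucc i)
      simpa using this
    · have := iInf_le (fun j : Fin (L + 1) => k j) (Fin.last L)
      simpa using this

private lemma step {t s n m' : ℕ} (Zm : Matrix (Fin t) (Fin n) ℂ)
    (Am : Matrix (Fin n) (Fin m') ℂ) (Wm : Matrix (Fin s) (Fin t) ℂ)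
    (hind : LinearIndependent ℂ (fun j : Fin t => star ∘ Zm j))
    (hWind : LinearIndependent ℂ (fun j : Fin s => star ∘ Wm j))
    (hWspan : span ℂ (Set.range fun j : Fin s => star ∘ Wm j)
      = ker (Matrix.mulVecLin (Zm * Am)ᴴ)) :
    LinearIndependent ℂ (fun j : Fin s => star ∘ (Wm * Zm) j) ∧
    span ℂ (Set.range fun j : Fin s => star ∘ (Wm * Zm) j)
      = span ℂ (Set.range fun j : Fin t => star ∘ Zm j) ⊓ ker (Matrix.mulVecLin Amᴴ) := by
  set f := Matrix.mulVecLin Zmᴴ with hfdef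
  have hf : ∀ x : Fin t → ℂ, f x = ∑ j, x j • (star ∘ Zm j) := by
    intro x
    funext k
    simp [hfdef, Matrix.mulVecLin, Matrix.mulVec, dotProduct, Finset.sum_apply,
      mul_comm]
  -- the rows of W*Z are f applied to the rows of W
  have hrow : (fun j : Fin s => star ∘ (Wm * Zm) j) = ⇑f ∘ (fun j => star ∘ Wm j) := by
    funext j
    funext k
    simp [hfdef, Matrix.mulVecLin, Matrix.mulVec, dotProduct, Matrix.mul_apply,
      Function.comp, mul_comm]
  -- ker f = ⊥
  have hker : ker f = ⊥ := by
    rw [LinearMap.ker_eq_bot']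
    intro x hx
    rw [hf] at hx
    have := Fintype.linearIndependent_iff.mp hind x hx
    funext i; exact this i
  -- range f = span of (conjugated) rows of Z
  have hrange : LinearMap.range f = span ℂ (Set.range fun j : Fin t => star ∘ Zm j) := by
    apply le_antisymm
    · rintro _ ⟨x, rfl⟩
      rw [hf]
      exact Submodule.sum_mem _ fun j _ =>
        Submodule.smul_mem _ _ (subset_span ⟨j, rfl⟩)
    · rw [span_le]
      rintro _ ⟨j, rfl⟩
      refine ⟨Pi.single j 1, ?_⟩
      rw [hf]
      simp [Pi.single_apply, ite_smul]
  -- the composed kernel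
  have hcomp : ker (Matrix.mulVecLin (Zm * Am)ᴴ) = comap f (ker (Matrix.mulVecLin Amᴴ)) := by
    rw [Matrix.conjTranspose_mul, Matrix.mulVecLin_mul, LinearMap.ker_comp]
  constructor
  · rw [hrow]
    exact hWind.map' f hker
  · rw [hrow, Set.range_comp, ← Submodule.map_span, hWspan, hcomp,
      Submodule.map_comap_eq, hrange]

/-- Correctness of the recursive left-nullspace estimation (Algorithm 1):
if the rows of `Z 0` form a basis of `ℂⁿ`, and at each step the rows of `W i`
form a basis of `ker ((Z i * A i)ᴴ)` and `Z (i+1) = W i * Z i`, then the rows of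
`Z L` form a basis of `⋂_{i<L} ker (A i)ᴴ`. -/
theorem stmt7 {n L : ℕ} {m : ℕ → ℕ} {t : ℕ → ℕ}
    (A : (i : ℕ) → Matrix (Fin n) (Fin (m i)) ℂ)
    (Z : (i : ℕ) → Matrix (Fin (t i)) (Fin n) ℂ)
    (W : (i : ℕ) → Matrix (Fin (t (i + 1))) (Fin (t i)) ℂ)
    (hZ0ind : LinearIndependent ℂ (fun j : Fin (t 0) => star ∘ Z 0 j))
    (hZ0span : span ℂ (Set.range fun j : Fin (t 0) => star ∘ Z 0 j) = ⊤)
    (hWind : ∀ i < L, LinearIndependent ℂ (fun j : Fin (t (i + 1)) => star ∘ W i j))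
    (hWspan : ∀ i < L,
      span ℂ (Set.range fun j : Fin (t (i + 1)) => star ∘ W i j)
        = ker (Matrix.mulVecLin (Z i * A i)ᴴ))
    (hrec : ∀ i < L, Z (i + 1) = W i * Z i) :
    LinearIndependent ℂ (fun j : Fin (t L) => star ∘ Z L j) ∧
    span ℂ (Set.range fun j : Fin (t L) => star ∘ Z L j)
      = ⨅ i : Fin L, ker (Matrix.mulVecLin (A (i : ℕ))ᴴ) := by
  induction L with
  | zero =>
    exact ⟨hZ0ind, by rw [hZ0span]; exact (iInf_of_empty _).symm⟩
  | succ L ih =>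
    obtain ⟨hind, hspan⟩ := ih (fun i hi => hWind i (Nat.lt_succ_of_lt hi))
      (fun i hi => hWspan i (Nat.lt_succ_of_lt hi))
      (fun i hi => hrec i (Nat.lt_succ_of_lt hi))
    have hZ : Z (L + 1) = W L * Z L := hrec L (Nat.lt_succ_self L)
    obtain ⟨h1, h2⟩ := step (Z L) (A L) (W L) hind (hWind L (Nat.lt_succ_self L))
      (hWspan L (Nat.lt_succ_self L))
    rw [hZ]
    refine ⟨h1, ?_⟩
    rw [h2, hspan]
    exact iInf_fin_succ' (fun i => ker (Matrix.mulVecLin (A i)ᴴ)) L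
end

section
/- Let K users have channels H₁,…,H_K ∈ ℂ^{n×m_k}, and suppose Wᵢ satisfies range(Wᵢᴴ) = ⋂_{k≠i} ker(H_kᴴ) for each i, where the rows of Wᵢ form a basis of range(Wᵢᴴ). If a new user with channel H_{K+1} is added, and Wᵢ' is chosen so that the rows of Wᵢ' form a basis of ker((WᵢH_{K+1})ᴴ), then the rows of Wᵢ'Wᵢ span ⋂_{k∈{1,…,K+1}, k≠i} ker(H_kᴴ). -/
open Matrix Submodule LinearMap

lemma row_span_eq {a b : ℕ} (M : Matrix (Fin a) (Fin b) ℂ) :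
    span ℂ (Set.range fun j : Fin a => star ∘ M j)
      = LinearMap.range (Matrix.mulVecLin Mᴴ) := by
  rw [Matrix.range_mulVecLin]
  congr 1

/-- Correctness of the user-inclusion update: if `range Wᴴ = ⋂_{k ≤ K, k ≠ i} ker (H k)ᴴ`,
the rows of `W` form a basis of `range Wᴴ`, and the rows of `W'` form a basis of
`ker ((W * H_{K+1})ᴴ)`, then the rows of `W' * W` span
`⋂_{k ≤ K+1, k ≠ i} ker (H k)ᴴ`. -/
theorem stmt13 {n K r r' : ℕ} {m : Fin (K + 1) → ℕ}
    (H : (k : Fin (K + 1)) → Matrix (Fin n) (Fin (m k)) ℂ)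
    (i : Fin K)
    (W : Matrix (Fin r) (Fin n) ℂ)
    (W' : Matrix (Fin r') (Fin r) ℂ)
    (hWrange : LinearMap.range (Matrix.mulVecLin Wᴴ)
      = ⨅ k : {k : Fin K // k ≠ i}, ker (Matrix.mulVecLin (H (Fin.castSucc k.1))ᴴ))
    (hWind : LinearIndependent ℂ (fun j : Fin r => star ∘ W j))
    (hWspan : span ℂ (Set.range fun j : Fin r => star ∘ W j)
      = LinearMap.range (Matrix.mulVecLin Wᴴ))
    (hW'ind : LinearIndependent ℂ (fun j : Fin r' => star ∘ W' j))
    (hW'span : span ℂ (Set.range fun j : Fin r' => star ∘ W' j)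
      = ker (Matrix.mulVecLin (W * H (Fin.last K))ᴴ)) :
    span ℂ (Set.range fun j : Fin r' => star ∘ (W' * W) j)
      = ⨅ k : {k : Fin (K + 1) // k ≠ Fin.castSucc i},
          ker (Matrix.mulVecLin (H k.1)ᴴ) := by
  rw [row_span_eq, Matrix.conjTranspose_mul, Matrix.mulVecLin_mul,
    LinearMap.range_comp]
  have h2 : LinearMap.range (Matrix.mulVecLin W'ᴴ)
      = ker (Matrix.mulVecLin (W * H (Fin.last K))ᴴ) := by
    rw [← row_span_eq, hW'span]
  rw [h2, Matrix.conjTranspose_mul, Matrix.mulVecLin_mul, LinearMap.ker_comp,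
    Submodule.map_comap_eq, hWrange]
  ext x
  simp only [Submodule.mem_inf, Submodule.mem_iInf, LinearMap.mem_ker, Subtype.forall]
  constructor
  · rintro ⟨h, h0⟩ k hk
    induction k using Fin.lastCases with
    | last => exact h0
    | cast j =>
      exact h j (fun hji => hk (by rw [hji]))
  · intro h
    refine ⟨fun j hj => h (Fin.castSucc j) (fun hc => hj (Fin.castSucc_injective _ hc)),
      h (Fin.last K) (by simp [Fin.ext_iff, Fin.is_lt i |>.ne'])⟩
end
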